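/- arXiv:1707.05852 — 2 statements merged into one kernel-verified Lean document; each statement's English description precedes it below -/
import Mathlib

section
/- For every ε > 0 there exists a(ε) > 0 such that for all a, b ∈ ℝⁿ with max(‖a‖, ‖b‖) > a(ε), the two-estimator cost satisfies J(a, b) > J_MS − ε. -/
open MeasureTheory Filter Topology Metric

/-!
Choose `k ≥ 1` so large that the second moment `τ` of `μ` outside `B = closedBall 0 k` is tiny,
and put `L = J_MS + 1`; by symmetry `‖a‖ > 3k + L`. If `‖b‖ ≤ k + L`, then `b` is the closer
estimator on all of `B`, and on the tail `‖b - x‖ ≤ (L + 2) ‖x‖`, so by the bias–variance identity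
`J(a, b) ≥ ∫_B ‖b - x‖² ≥ ∫ ‖b - x‖² - (L + 2)² τ ≥ J_MS - (L + 2)² τ`. If `‖b‖ > k + L`, both
estimators are at distance at least `L` from `B`, so `J(a, b) ≥ L² μ(B) ≥ L² (1 - τ)` (as
`μ(Bᶜ) ≤ τ` for `k ≥ 1`), and `L² ≥ J_MS + 1`. Both losses are below `ε` once `(L + 2)² τ < ε`.
-/

section Tail

variable {X G : Type*} [PseudoMetricSpace X] [MeasurableSpace X] [OpensMeasurableSpace X]
  [NormedAddCommGroup G] [NormedSpace ℝ G] {μ : Measure X}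

theorem tendsto_setIntegral_compl_closedBall {f : X → G} (hf : Integrable f μ) (x₀ : X) :
    Tendsto (fun r : ℝ => ∫ x in (closedBall x₀ r)ᶜ, f x ∂μ) atTop (𝓝 0) := by
  have h := tendsto_setIntegral_of_antitone (μ := μ) (f := f)
    (s := fun r : ℝ => (closedBall x₀ r)ᶜ) (fun r => measurableSet_closedBall.compl)
    (fun r r' hrr' => Set.compl_subset_compl.2 (closedBall_subset_closedBall hrr'))
    ⟨0, hf.integrableOn⟩
  have hempty : (⋂ r : ℝ, (closedBall x₀ r)ᶜ) = ∅ := by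
    rw [← Set.compl_iUnion, Set.compl_empty_iff]
    exact Set.eq_univ_of_forall fun x => Set.mem_iUnion.2 ⟨dist x x₀, mem_closedBall.2 le_rfl⟩
  rwa [hempty, Measure.restrict_empty, integral_zero_measure] at h

end Tail

section Bounds

variable {α : Type*} [MeasurableSpace α] {μ : Measure α} {f g : α → ℝ} {s : Set α}

theorem integral_sub_setIntegral_compl_le (hs : MeasurableSet s) (hf : Integrable f μ)
    (hg : Integrable g μ) (hg₀ : 0 ≤ g) (hfg : ∀ x ∈ s, f x ≤ g x) :
    ∫ x, f x ∂μ - ∫ x in sᶜ, f x ∂μ ≤ ∫ x, g x ∂μ := by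
  rw [← integral_add_compl hs hf, add_sub_cancel_right]
  exact (setIntegral_mono_on hf.integrableOn hg.integrableOn hs hfg).trans
    (setIntegral_le_integral hg (ae_of_all _ hg₀))

theorem mul_measureReal_le_integral_of_forall_le [IsFiniteMeasure μ] (hs : MeasurableSet s)
    (hg : Integrable g μ) (hg₀ : 0 ≤ g) {c : ℝ} (hcg : ∀ x ∈ s, c ≤ g x) :
    c * μ.real s ≤ ∫ x, g x ∂μ :=
  (setIntegral_ge_of_const_le_real hs (measure_ne_top μ s) hcg hg.integrableOn).trans
    (setIntegral_le_integral hg (ae_of_all _ hg₀))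

end Bounds

section Normed

variable {E : Type*} [NormedAddCommGroup E] [MeasurableSpace E] {μ : Measure E}
  [IsFiniteMeasure μ]

theorem integrable_norm_sub_sq (hX : MemLp id 2 μ) (c : E) :
    Integrable (fun x => ‖c - x‖ ^ 2) μ :=
  ((memLp_const c).sub hX).integrable_norm_pow two_ne_zero

theorem integrable_min_norm_sub_sq (hX : MemLp id 2 μ) (a b : E) :
    Integrable (fun x => min (‖a - x‖ ^ 2) (‖b - x‖ ^ 2)) μ :=
  (integrable_norm_sub_sq hX a).inf (integrable_norm_sub_sq hX b)

theorem sq_mul_measureReal_closedBall_le_integral_min [OpensMeasurableSpace E] (hX : MemLp id 2 μ)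
    {k L : ℝ} (hL : 0 ≤ L) {a b : E} (ha : k + L < ‖a‖) (hb : k + L < ‖b‖) :
    L ^ 2 * μ.real (closedBall 0 k) ≤ ∫ x, min (‖a - x‖ ^ 2) (‖b - x‖ ^ 2) ∂μ := by
  refine mul_measureReal_le_integral_of_forall_le measurableSet_closedBall
    (integrable_min_norm_sub_sq hX a b) (fun x => le_min (sq_nonneg _) (sq_nonneg _))
    fun x hx => ?_
  have hxk : ‖x‖ ≤ k := by simpa using hx
  have hfar : ∀ c : E, k + L < ‖c‖ → L ^ 2 ≤ ‖c - x‖ ^ 2 := fun c hc =>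
    pow_le_pow_left₀ hL (by linarith [norm_sub_norm_le c x]) 2
  exact le_min (hfar a ha) (hfar b hb)

end Normed

section InnerProduct

variable {E : Type*} [NormedAddCommGroup E] [InnerProductSpace ℝ E] [CompleteSpace E]
  [MeasurableSpace E] {μ : Measure E} [IsProbabilityMeasure μ]

theorem integral_norm_sub_sq (hX : MemLp id 2 μ) (c : E) :
    ∫ x, ‖c - x‖ ^ 2 ∂μ = ∫ x, ‖x - ∫ y, y ∂μ‖ ^ 2 ∂μ + ‖c - ∫ y, y ∂μ‖ ^ 2 := by
  set m := ∫ y, y ∂μ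
  have hid : Integrable (fun x => x) μ := hX.integrable one_le_two
  have hcen : Integrable (fun x => x - m) μ := hid.sub (integrable_const m)
  have hmean : ∫ x, (x - m) ∂μ = 0 := by
    rw [integral_sub hid (integrable_const m)]
    simp [m]
  have hexpand : (fun x => ‖c - x‖ ^ 2) =
      fun x => ‖x - m‖ ^ 2 + (‖c - m‖ ^ 2 - 2 * inner ℝ (c - m) (x - m)) := by
    funext x
    rw [show c - x = (c - m) - (x - m) by abel, norm_sub_sq_real]
    ring
  have hinner : Integrable (fun x => 2 * inner ℝ (c - m) (x - m)) μ :=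
    (hcen.const_inner _).const_mul 2
  have hcross : Integrable (fun x => ‖c - m‖ ^ 2 - 2 * inner ℝ (c - m) (x - m)) μ :=
    (integrable_const _).sub hinner
  have hsq : Integrable (fun x => ‖x - m‖ ^ 2) μ := by
    simpa only [norm_sub_rev] using integrable_norm_sub_sq hX m
  rw [hexpand, integral_add hsq hcross, integral_sub (integrable_const _) hinner,
    integral_const_mul, integral_inner hcen, hmean]
  simp

theorem integral_norm_sub_mean_sq_le (hX : MemLp id 2 μ) (c : E) :
    ∫ x, ‖x - ∫ y, y ∂μ‖ ^ 2 ∂μ ≤ ∫ x, ‖c - x‖ ^ 2 ∂μ := by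
  rw [integral_norm_sub_sq hX c]
  exact le_add_of_nonneg_right (sq_nonneg _)

variable [OpensMeasurableSpace E]

theorem integral_norm_sub_mean_sq_sub_tail_le_integral_min (hX : MemLp id 2 μ) {k L : ℝ}
    (hk : 1 ≤ k) (hL : 0 ≤ L) {a b : E} (ha : 3 * k + L < ‖a‖) (hb : ‖b‖ ≤ k + L) :
    ∫ x, ‖x - ∫ y, y ∂μ‖ ^ 2 ∂μ - (L + 2) ^ 2 * ∫ x in (closedBall 0 k)ᶜ, ‖x‖ ^ 2 ∂μ ≤
      ∫ x, min (‖a - x‖ ^ 2) (‖b - x‖ ^ 2) ∂μ := by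
  have hmom : Integrable (fun x : E => ‖x‖ ^ 2) μ := hX.integrable_norm_pow two_ne_zero
  have htail : ∫ x in (closedBall 0 k)ᶜ, ‖b - x‖ ^ 2 ∂μ ≤
      (L + 2) ^ 2 * ∫ x in (closedBall 0 k)ᶜ, ‖x‖ ^ 2 ∂μ := by
    rw [← integral_const_mul]
    refine setIntegral_mono_on (integrable_norm_sub_sq hX b).integrableOn
      (hmom.const_mul _).integrableOn measurableSet_closedBall.compl fun x hx => ?_
    have hxk : k < ‖x‖ := by simpa using hx
    have : ‖b - x‖ ≤ (L + 2) * ‖x‖ := by nlinarith [norm_sub_le b x]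
    rw [← mul_pow]
    exact pow_le_pow_left₀ (norm_nonneg _) this 2
  have hnear : ∀ x ∈ closedBall (0 : E) k, ‖b - x‖ ^ 2 ≤ min (‖a - x‖ ^ 2) (‖b - x‖ ^ 2) := by
    intro x hx
    have hxk : ‖x‖ ≤ k := by simpa using hx
    have : ‖b - x‖ ≤ ‖a - x‖ := by linarith [norm_sub_le b x, norm_sub_norm_le a x]
    exact le_min (pow_le_pow_left₀ (norm_nonneg _) this 2) le_rfl
  calc ∫ x, ‖x - ∫ y, y ∂μ‖ ^ 2 ∂μ - (L + 2) ^ 2 * ∫ x in (closedBall 0 k)ᶜ, ‖x‖ ^ 2 ∂μ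
      ≤ ∫ x, ‖b - x‖ ^ 2 ∂μ - ∫ x in (closedBall 0 k)ᶜ, ‖b - x‖ ^ 2 ∂μ :=
        sub_le_sub (integral_norm_sub_mean_sq_le hX b) htail
    _ ≤ ∫ x, min (‖a - x‖ ^ 2) (‖b - x‖ ^ 2) ∂μ :=
        integral_sub_setIntegral_compl_le measurableSet_closedBall
          (integrable_norm_sub_sq hX b) (integrable_min_norm_sub_sq hX a b)
          (fun x => le_min (sq_nonneg _) (sq_nonneg _)) hnear

theorem integral_norm_sub_mean_sq_sub_lt_integral_min (hX : MemLp id 2 μ) {k ε : ℝ} (hk : 1 ≤ k)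
    (htail : (∫ x, ‖x - ∫ y, y ∂μ‖ ^ 2 ∂μ + 3) ^ 2 * ∫ x in (closedBall 0 k)ᶜ, ‖x‖ ^ 2 ∂μ < ε)
    {a : E} (ha : 3 * k + (∫ x, ‖x - ∫ y, y ∂μ‖ ^ 2 ∂μ + 1) < ‖a‖) (b : E) :
    ∫ x, ‖x - ∫ y, y ∂μ‖ ^ 2 ∂μ - ε < ∫ x, min (‖a - x‖ ^ 2) (‖b - x‖ ^ 2) ∂μ := by
  set J := ∫ x, ‖x - ∫ y, y ∂μ‖ ^ 2 ∂μ
  set τ := ∫ x in (closedBall (0 : E) k)ᶜ, ‖x‖ ^ 2 ∂μ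
  have hJ : 0 ≤ J := integral_nonneg fun x => sq_nonneg _
  have hτ : 0 ≤ τ := setIntegral_nonneg measurableSet_closedBall.compl fun x _ => sq_nonneg _
  rcases le_or_gt ‖b‖ (k + (J + 1)) with hb | hb
  · have := integral_norm_sub_mean_sq_sub_tail_le_integral_min hX hk (by positivity) ha hb
    linarith [show J + 1 + 2 = J + 3 by ring]
  · have hfar := sq_mul_measureReal_closedBall_le_integral_min hX (by positivity)
      (by linarith : k + (J + 1) < ‖a‖) hb
    have hmom : Integrable (fun x : E => ‖x‖ ^ 2) μ := hX.integrable_norm_pow two_ne_zero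
    have hmass : μ.real (closedBall 0 k)ᶜ ≤ τ := by
      simpa using setIntegral_ge_of_const_le_real (c := 1) measurableSet_closedBall.compl
        (measure_ne_top μ _) (fun x hx => one_le_pow₀ (hk.trans (by simpa using hx : k < ‖x‖).le))
        hmom.integrableOn
    rw [probReal_compl_eq_one_sub measurableSet_closedBall] at hmass
    have hJ3 : (J + 1) ^ 2 * τ ≤ (J + 3) ^ 2 * τ :=
      mul_le_mul_of_nonneg_right (by nlinarith) hτ
    nlinarith [mul_le_mul_of_nonneg_left (sub_le_comm.1 hmass) (sq_nonneg (J + 1))]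

end InnerProduct

theorem cost_large_outside_ball_general
    (n : ℕ)
    (μ : Measure (EuclideanSpace ℝ (Fin n))) [IsProbabilityMeasure μ]
    (hmom : Integrable (fun x => ‖x‖ ^ 2) μ)
    (ε : ℝ) (hε : 0 < ε) :
    ∃ aε : ℝ, 0 < aε ∧
      ∀ a b : EuclideanSpace ℝ (Fin n), aε < max ‖a‖ ‖b‖ →
        (∫ x, ‖x - (∫ y, y ∂μ)‖ ^ 2 ∂μ) - ε <
          ∫ x, min (‖a - x‖ ^ 2) (‖b - x‖ ^ 2) ∂μ := by
  have hX : MemLp id 2 μ := (memLp_two_iff_integrable_sq_norm aestronglyMeasurable_id).2 hmom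
  set J := ∫ x, ‖x - ∫ y, y ∂μ‖ ^ 2 ∂μ
  have hJ : 0 ≤ J := integral_nonneg fun x => sq_nonneg _
  obtain ⟨k, hk, htail⟩ : ∃ k : ℝ, 1 ≤ k ∧
      (J + 3) ^ 2 * ∫ x in (closedBall 0 k)ᶜ, ‖x‖ ^ 2 ∂μ < ε :=
    ((eventually_ge_atTop 1).and
      (((tendsto_setIntegral_compl_closedBall hmom 0).const_mul _).eventually
        (gt_mem_nhds (by simpa using hε)))).exists
  refine ⟨3 * k + (J + 1), by positivity, fun a b hab => ?_⟩
  rcases lt_max_iff.1 hab with ha | hb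
  · exact integral_norm_sub_mean_sq_sub_lt_integral_min hX hk htail ha b
  · simpa only [min_comm] using integral_norm_sub_mean_sq_sub_lt_integral_min hX hk htail hb a

/-- For every `ε > 0` there exists `a(ε) > 0` such that whenever
`max(‖a‖, ‖b‖) > a(ε)`, the two-estimator cost satisfies `J(a,b) > J_MS − ε`. -/
theorem cost_large_outside_ball
    (n : ℕ) (hn : 1 ≤ n)
    (μ : Measure (EuclideanSpace ℝ (Fin n))) [IsProbabilityMeasure μ]
    (hac : μ ≪ volume)
    (hmom : Integrable (fun x => ‖x‖ ^ 2) μ)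
    (ε : ℝ) (hε : 0 < ε) :
    ∃ aε : ℝ, 0 < aε ∧
      ∀ a b : EuclideanSpace ℝ (Fin n), aε < max ‖a‖ ‖b‖ →
        (∫ x, ‖x - (∫ y, y ∂μ)‖ ^ 2 ∂μ) - ε <
          ∫ x, min (‖a - x‖ ^ 2) (‖b - x‖ ^ 2) ∂μ :=
  cost_large_outside_ball_general n μ hmom ε hε
end

section
/- For every χ > 0, −φ(χ) + 2φ(0)Φ(χ) − χΦ(χ) < 0, where φ(0) = 1/√(2π). -/
open MeasureTheory

/-- The standard normal probability density function. -/
noncomputable def stdGaussianPDF (x : ℝ) : ℝ :=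
  Real.exp (-x ^ 2 / 2) / Real.sqrt (2 * Real.pi)

/-- The standard normal cumulative distribution function. -/
noncomputable def stdGaussianCDF (x : ℝ) : ℝ :=
  ∫ t in Set.Iic x, stdGaussianPDF t

/-!
Write `a = φ(0) = 1/√(2π)`; since `π > 2`, `a < 1/2`. If `χ ≥ 2a` the expression is
`-φ(χ) + (2a - χ)Φ(χ) ≤ -φ(χ) < 0`. Otherwise `2a - χ > 0`, and the first-order bounds
`Φ(χ) ≤ 1/2 + aχ` (from `φ ≤ a` and `Φ(0) = 1/2`) and `φ(χ) ≥ a(1 - χ²/2)`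
(from `eˣ ≥ 1 + x`) bound the expression by `χ(2a² - 1/2 - aχ/2) < 0`.
-/

open ProbabilityTheory

lemma stdGaussianPDF_eq_gaussianPDFReal : stdGaussianPDF = gaussianPDFReal 0 1 := by
  ext x
  simp [stdGaussianPDF, gaussianPDFReal, div_eq_inv_mul]

lemma stdGaussianPDF_zero : stdGaussianPDF 0 = 1 / Real.sqrt (2 * Real.pi) := by
  simp [stdGaussianPDF]

lemma stdGaussianPDF_pos (x : ℝ) : 0 < stdGaussianPDF x := by
  unfold stdGaussianPDF
  positivity

lemma stdGaussianPDF_le_stdGaussianPDF_zero (x : ℝ) : stdGaussianPDF x ≤ stdGaussianPDF 0 := by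
  unfold stdGaussianPDF
  gcongr ?_ / _
  exact Real.exp_le_exp.2 (by nlinarith [sq_nonneg x])

lemma one_sub_sq_div_two_mul_stdGaussianPDF_zero_le (x : ℝ) :
    (1 - x ^ 2 / 2) * stdGaussianPDF 0 ≤ stdGaussianPDF x := by
  rw [stdGaussianPDF_zero, stdGaussianPDF, mul_one_div]
  gcongr
  linarith [Real.add_one_le_exp (-x ^ 2 / 2)]

lemma two_lt_sqrt_two_mul_pi : 2 < Real.sqrt (2 * Real.pi) := by
  rw [Real.lt_sqrt zero_le_two]
  linarith [Real.pi_gt_three]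

lemma stdGaussianPDF_zero_lt_half : stdGaussianPDF 0 < 1 / 2 := by
  have h := two_lt_sqrt_two_mul_pi
  rw [stdGaussianPDF_zero, div_lt_div_iff₀ (by linarith) two_pos]
  linarith

lemma integrable_stdGaussianPDF : Integrable stdGaussianPDF := by
  rw [stdGaussianPDF_eq_gaussianPDFReal]
  exact integrable_gaussianPDFReal 0 1

lemma stdGaussianCDF_zero : stdGaussianCDF 0 = 1 / 2 := by
  have h_symm : stdGaussianCDF 0 = ∫ x in Set.Ioi 0, stdGaussianPDF x := by
    simpa [stdGaussianPDF, stdGaussianCDF] using integral_comp_neg_Iic 0 stdGaussianPDF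
  have h_total : stdGaussianCDF 0 + ∫ x in Set.Ioi 0, stdGaussianPDF x = 1 := by
    rw [stdGaussianCDF, intervalIntegral.integral_Iic_add_Ioi integrable_stdGaussianPDF.integrableOn
      integrable_stdGaussianPDF.integrableOn, stdGaussianPDF_eq_gaussianPDFReal,
      integral_gaussianPDFReal_eq_one 0 one_ne_zero]
  linarith

lemma stdGaussianCDF_eq_half_add_intervalIntegral (x : ℝ) :
    stdGaussianCDF x = 1 / 2 + ∫ t in 0..x, stdGaussianPDF t := by
  rw [← intervalIntegral.integral_Iic_sub_Iic integrable_stdGaussianPDF.integrableOn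
    integrable_stdGaussianPDF.integrableOn, ← stdGaussianCDF, ← stdGaussianCDF,
    stdGaussianCDF_zero]
  ring

lemma half_le_stdGaussianCDF {x : ℝ} (hx : 0 ≤ x) : 1 / 2 ≤ stdGaussianCDF x := by
  rw [stdGaussianCDF_eq_half_add_intervalIntegral]
  linarith [intervalIntegral.integral_nonneg (μ := volume) hx fun t _ => (stdGaussianPDF_pos t).le]

lemma stdGaussianCDF_le_half_add_mul {x : ℝ} (hx : 0 ≤ x) :
    stdGaussianCDF x ≤ 1 / 2 + x * stdGaussianPDF 0 := by
  have h := intervalIntegral.integral_mono_on hx integrable_stdGaussianPDF.intervalIntegrable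
    intervalIntegrable_const fun t _ => stdGaussianPDF_le_stdGaussianPDF_zero t
  rw [intervalIntegral.integral_const, smul_eq_mul, sub_zero] at h
  rw [stdGaussianCDF_eq_half_add_intervalIntegral]
  linarith

/-- For every `χ > 0`, `−φ(χ) + 2φ(0)Φ(χ) − χΦ(χ) < 0`, where `φ(0) = 1/√(2π)`. -/
theorem g1_HT_neg (χ : ℝ) (hχ : 0 < χ) :
    -stdGaussianPDF χ + 2 * (1 / Real.sqrt (2 * Real.pi)) * stdGaussianCDF χ -
      χ * stdGaussianCDF χ < 0 := by
  rw [← stdGaussianPDF_zero]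
  set a := stdGaussianPDF 0
  have ha_pos : 0 < a := stdGaussianPDF_pos 0
  have ha_lt : a < 1 / 2 := stdGaussianPDF_zero_lt_half
  have hΦ_ge := half_le_stdGaussianCDF hχ.le
  rcases le_or_gt (2 * a) χ with hχ_large | hχ_small
  · have hΦ_term : (2 * a - χ) * stdGaussianCDF χ ≤ 0 :=
      mul_nonpos_of_nonpos_of_nonneg (by linarith) (by linarith)
    linarith [stdGaussianPDF_pos χ]
  · have hΦ_term : (2 * a - χ) * stdGaussianCDF χ ≤ (2 * a - χ) * (1 / 2 + χ * a) :=
      mul_le_mul_of_nonneg_left (stdGaussianCDF_le_half_add_mul hχ.le) (by linarith)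
    have h_quadratic : (2 * a - χ) * (1 / 2 + χ * a) < (1 - χ ^ 2 / 2) * a := by
      have h_gap : 0 < 1 / 2 - 2 * a ^ 2 := by nlinarith
      nlinarith [mul_pos hχ h_gap, mul_pos (mul_pos hχ hχ) ha_pos]
    linarith [one_sub_sq_div_two_mul_stdGaussianPDF_zero_le χ]
end
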